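/- For i = 1,…,N let Λ_i : ℝ^d × ℝ^d × ℝ^N → Mat_{d×d}(ℝ) take values in symmetric matrices and set F^{fr(i)}(q,v,S) = −Λ_i(q,v,S)·v; let κ_{ij} = κ_{ji} ≥ 0 and J^i_j = −κ_{ij} + δ_{ij} Σ_k κ_{ik}. Let (q(t), p(t), S_1(t), …, S_N(t)) be a smooth curve along which T_i := ∂H/∂S_i ≠ 0 for all i and all t. Then the curve satisfies q̇ = ∂H/∂p, ṗ = −∂H/∂q + Σ_i F^{fr(i)}(q, ∂H/∂p, S), and (∂H/∂S_i)·Ṡ_i = −⟨F^{fr(i)}(q, ∂H/∂p, S), ∂H/∂p⟩ − Σ_j J^i_j·(∂H/∂S_j) for each i, if and only if for every smooth function F : ℝ^d × ℝ^d × ℝ^N → ℝ one has d/dt F(q,p,S) = {F,H} + Σ_{i=1}^N (F,H;S,H)_{fr(i)} + (F,H;S,H)_{tr} along the curve, where S := Σ_{i=1}^N S_i, (F,G;M,N)_{fr(i)} = (1/T_i)·(⟨∂N/∂p, Λ_i ∂G/∂p⟩·(∂F/∂S_i)·(∂M/∂S_i) − ⟨∂N/∂p, Λ_i ∂F/∂p⟩·(∂G/∂S_i)·(∂M/∂S_i)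 + ⟨∂M/∂p, Λ_i ∂F/∂p⟩·(∂G/∂S_i)·(∂N/∂S_i) − ⟨∂M/∂p, Λ_i ∂G/∂p⟩·(∂F/∂S_i)·(∂N/∂S_i)), and (F,G;M,N)_{tr} = Σ_{i,j=1}^N (κ_{ij}/2)·(1/(T_i T_j))·((∂F/∂S_i)·(∂G/∂S_j) − (∂F/∂S_j)·(∂G/∂S_i))·((∂M/∂S_i)·(∂N/∂S_j) − (∂M/∂S_j)·(∂N/∂S_i)), with Λ_i evaluated at (q, ∂H/∂p, S). -/

import Mathlib

open scoped RealInnerProductSpace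

noncomputable section

/-- Partial gradient of `F (q, p, S)` in the first (position) variable. -/
def pdq {d N : ℕ} (F : EuclideanSpace ℝ (Fin d) → EuclideanSpace ℝ (Fin d) → (Fin N → ℝ) → ℝ)
    (q p : EuclideanSpace ℝ (Fin d)) (S : Fin N → ℝ) : EuclideanSpace ℝ (Fin d) :=
  gradient (fun x => F x p S) q

/-- Partial gradient of `F (q, p, S)` in the second (momentum) variable. -/
def pdp {d N : ℕ} (F : EuclideanSpace ℝ (Fin d) → EuclideanSpace ℝ (Fin d) → (Fin N → ℝ) → ℝ)
    (q p : EuclideanSpace ℝ (Fin d)) (S : Fin N → ℝ) : EuclideanSpace ℝ (Fin d) :=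
  gradient (fun y => F q y S) p

/-- Partial derivative of `F (q, p, S)` in the entropy `S i`. -/
def pdSi {d N : ℕ} (F : EuclideanSpace ℝ (Fin d) → EuclideanSpace ℝ (Fin d) → (Fin N → ℝ) → ℝ)
    (q p : EuclideanSpace ℝ (Fin d)) (S : Fin N → ℝ) (i : Fin N) : ℝ :=
  deriv (fun s => F q p (Function.update S i s)) (S i)

/-- Matrix-vector action on Euclidean space. -/
def mulVecE {d : ℕ} (A : Matrix (Fin d) (Fin d) ℝ) (v : EuclideanSpace ℝ (Fin d)) :
    EuclideanSpace ℝ (Fin d) :=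
  (WithLp.equiv 2 (Fin d → ℝ)).symm (A.mulVec ((WithLp.equiv 2 (Fin d → ℝ)) v))

/-- `J^i_j = −κ_{ij} + δ_{ij} Σ_k κ_{ik}`. -/
def Jmat {N : ℕ} (κ : Fin N → Fin N → ℝ) (i j : Fin N) : ℝ :=
  - κ i j + (if i = j then ∑ k, κ i k else 0)

namespace MetriAux

variable {d N : ℕ}

lemma inner_gradient' (f : EuclideanSpace ℝ (Fin d) → ℝ) (x v : EuclideanSpace ℝ (Fin d)) :
    ⟪gradient f x, v⟫ = fderiv ℝ f x v := by
  simp [gradient, InnerProductSpace.toDual_symm_apply]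

lemma gradient_const' (c : ℝ) (x : EuclideanSpace ℝ (Fin d)) :
    gradient (fun _ : EuclideanSpace ℝ (Fin d) => c) x = 0 := by
  apply ext_inner_right ℝ
  intro v
  rw [inner_gradient']
  simp

lemma gradient_coord (k : Fin d) (x : EuclideanSpace ℝ (Fin d)) :
    gradient (fun y : EuclideanSpace ℝ (Fin d) => y k) x = EuclideanSpace.single k 1 := by
  apply ext_inner_right ℝ
  intro v
  rw [inner_gradient']
  have h := (EuclideanSpace.proj (𝕜 := ℝ) (ι := Fin d) k).hasFDerivAt (x := x)
  have hcle : ⇑(EuclideanSpace.proj (𝕜 := ℝ) (ι := Fin d) k)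
      = (fun y : EuclideanSpace ℝ (Fin d) => y k) := by ext y; simp
  rw [hcle] at h
  rw [h.fderiv]
  simp [EuclideanSpace.inner_single_left]

lemma mulVecE_zero (A : Matrix (Fin d) (Fin d) ℝ) : mulVecE A (0 : EuclideanSpace ℝ (Fin d)) = 0 := by
  simp [mulVecE]

lemma inner_mulVecE_symm (A : Matrix (Fin d) (Fin d) ℝ) (hA : A.IsSymm)
    (u v : EuclideanSpace ℝ (Fin d)) : ⟪u, mulVecE A v⟫ = ⟪mulVecE A u, v⟫ := by
  simp only [mulVecE, PiLp.inner_apply, RCLike.inner_apply, starRingEnd_apply, star_trivial,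
    WithLp.equiv_symm_apply, PiLp.toLp_apply]
  set u' := (WithLp.equiv 2 (Fin d → ℝ)) u with hu'
  set v' := (WithLp.equiv 2 (Fin d → ℝ)) v with hv'
  have hue : ∀ i, u i = u' i := fun i => rfl
  have hve : ∀ i, v i = v' i := fun i => rfl
  simp only [hue, hve]
  change dotProduct (A.mulVec v') u' = dotProduct v' (A.mulVec u')
  rw [Matrix.dotProduct_mulVec]
  congr 1
  rw [← Matrix.vecMul_transpose, hA.eq]

lemma fderiv_decomp (F : EuclideanSpace ℝ (Fin d) → EuclideanSpace ℝ (Fin d) → (Fin N → ℝ) → ℝ)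
    (hF : ContDiff ℝ (⊤ : ℕ∞) (fun x : EuclideanSpace ℝ (Fin d) × EuclideanSpace ℝ (Fin d) × (Fin N → ℝ) => F x.1 x.2.1 x.2.2))
    (q p : EuclideanSpace ℝ (Fin d)) (S : Fin N → ℝ) (a b : EuclideanSpace ℝ (Fin d)) (c : Fin N → ℝ) :
    fderiv ℝ (fun x : EuclideanSpace ℝ (Fin d) × EuclideanSpace ℝ (Fin d) × (Fin N → ℝ) => F x.1 x.2.1 x.2.2) (q, p, S) (a, b, c)
      = ⟪pdq F q p S, a⟫ + ⟪pdp F q p S, b⟫ + ∑ i, c i * pdSi F q p S i := by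
  set F' := fun x : EuclideanSpace ℝ (Fin d) × EuclideanSpace ℝ (Fin d) × (Fin N → ℝ) => F x.1 x.2.1 x.2.2 with hF'
  have hD : HasFDerivAt F' (fderiv ℝ F' (q,p,S)) (q,p,S) :=
    (hF.differentiable (by simp) (q,p,S)).hasFDerivAt
  set D := fderiv ℝ F' (q,p,S) with hDdef
  have hq1 : ∀ v : EuclideanSpace ℝ (Fin d), ⟪pdq F q p S, v⟫ = D (v, 0, 0) := by
    intro v
    have h1 : HasFDerivAt (fun x : EuclideanSpace ℝ (Fin d) => F x p S)
        (D.comp ((ContinuousLinearMap.id ℝ _).prod 0)) q :=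
      by
        have hi : HasFDerivAt (fun x : EuclideanSpace ℝ (Fin d) => ((x, p, S) : EuclideanSpace ℝ (Fin d) × EuclideanSpace ℝ (Fin d) × (Fin N → ℝ)))
            ((ContinuousLinearMap.id ℝ _).prod 0) q :=
          (hasFDerivAt_id (𝕜 := ℝ) q).prodMk (hasFDerivAt_const (p,S) q)
        exact hD.comp q hi
    rw [pdq, inner_gradient', h1.fderiv]
    rfl
  have hp1 : ∀ v : EuclideanSpace ℝ (Fin d), ⟪pdp F q p S, v⟫ = D (0, v, 0) := by
    intro v
    have h1 : HasFDerivAt (fun y : EuclideanSpace ℝ (Fin d) => F q y S)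
        ((D.comp (((0 : _ →L[ℝ] _).prod ((ContinuousLinearMap.id ℝ _).prod 0)))) ) p :=
      by
        have hi : HasFDerivAt (fun y : EuclideanSpace ℝ (Fin d) => ((q, y, S) : EuclideanSpace ℝ (Fin d) × EuclideanSpace ℝ (Fin d) × (Fin N → ℝ)))
            ((0 : _ →L[ℝ] _).prod ((ContinuousLinearMap.id ℝ _).prod 0)) p :=
          (hasFDerivAt_const q p).prodMk ((hasFDerivAt_id (𝕜 := ℝ) p).prodMk (hasFDerivAt_const S p))
        exact hD.comp p hi
    rw [pdp, inner_gradient', h1.fderiv]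
    rfl
  have hs1 : ∀ i : Fin N, pdSi F q p S i = D (0, 0, Pi.single i 1) := by
    intro i
    have hcurve : HasDerivAt (fun s => ((q, p, Function.update S i s) :
        EuclideanSpace ℝ (Fin d) × EuclideanSpace ℝ (Fin d) × (Fin N → ℝ)))
        ((0, 0, Pi.single i 1)) (S i) :=
      (hasDerivAt_const _ q).prodMk ((hasDerivAt_const _ p).prodMk (hasDerivAt_update S i (S i)))
    have hD' : HasFDerivAt F' D (q, p, Function.update S i (S i)) := by
      rw [Function.update_eq_self]; exact hD
    have h2 : HasDerivAt (fun s => F q p (Function.update S i s)) (D (0, 0, Pi.single i 1)) (S i) :=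
      by have := hD'.comp_hasDerivAt (S i) hcurve; exact this
    rw [pdSi, h2.deriv]
  have hsum : D (0, 0, c) = ∑ i, c i * pdSi F q p S i := by
    have hc : (0, 0, c) = ∑ i, c i • ((0, 0, Pi.single i 1) :
        EuclideanSpace ℝ (Fin d) × EuclideanSpace ℝ (Fin d) × (Fin N → ℝ)) := by
      rw [Prod.ext_iff]
      constructor
      · simp [Prod.fst_sum]
      rw [Prod.ext_iff]
      constructor
      · simp [Prod.fst_sum, Prod.snd_sum]
      · simp only [Prod.snd_sum, Prod.smul_snd]
        rw [← Finset.univ_sum_single c]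
        congr 1
        ext i j
        simp [Pi.single_apply, mul_comm]
    rw [hc, map_sum]
    congr 1
    ext i
    rw [map_smul, hs1 i]
    rfl
  have habc : ((a, b, c) : EuclideanSpace ℝ (Fin d) × EuclideanSpace ℝ (Fin d) × (Fin N → ℝ))
      = (a,0,0) + (0,b,0) + (0,0,c) := by simp
  rw [habc, map_add, map_add, hq1 a, hp1 b, hsum]

lemma deriv_along (F : EuclideanSpace ℝ (Fin d) → EuclideanSpace ℝ (Fin d) → (Fin N → ℝ) → ℝ)
    (hF : ContDiff ℝ (⊤ : ℕ∞) (fun x : EuclideanSpace ℝ (Fin d) × EuclideanSpace ℝ (Fin d) × (Fin N → ℝ) => F x.1 x.2.1 x.2.2))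
    (q p : ℝ → EuclideanSpace ℝ (Fin d)) (S : ℝ → Fin N → ℝ)
    (hq : ContDiff ℝ (⊤ : ℕ∞) q) (hp : ContDiff ℝ (⊤ : ℕ∞) p) (hS : ContDiff ℝ (⊤ : ℕ∞) S) (t : ℝ) :
    deriv (fun τ => F (q τ) (p τ) (S τ)) t
      = ⟪pdq F (q t) (p t) (S t), deriv q t⟫ + ⟪pdp F (q t) (p t) (S t), deriv p t⟫
        + ∑ i, deriv (fun τ => S τ i) t * pdSi F (q t) (p t) (S t) i := by
  have hSd := (hS.differentiable (by simp) t).hasDerivAt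
  have hc : HasDerivAt (fun τ => ((q τ, p τ, S τ) :
      EuclideanSpace ℝ (Fin d) × EuclideanSpace ℝ (Fin d) × (Fin N → ℝ)))
      (deriv q t, deriv p t, deriv S t) t :=
    ((hq.differentiable (by simp) t).hasDerivAt).prodMk
      (((hp.differentiable (by simp) t).hasDerivAt).prodMk hSd)
  have h2 : HasDerivAt (fun τ => F (q τ) (p τ) (S τ))
      (fderiv ℝ (fun x : EuclideanSpace ℝ (Fin d) × EuclideanSpace ℝ (Fin d) × (Fin N → ℝ) =>
        F x.1 x.2.1 x.2.2) (q t, p t, S t) (deriv q t, deriv p t, deriv S t)) t :=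
    ((hF.differentiable (by simp) _).hasFDerivAt).comp_hasDerivAt t hc
  rw [h2.deriv, fderiv_decomp F hF _ _ _ _ _ _]
  congr 1
  refine Finset.sum_congr rfl fun i _ => ?_
  congr 1
  exact ((hasDerivAt_pi.mp hSd i).deriv).symm

lemma deriv_coordE (q : ℝ → EuclideanSpace ℝ (Fin d)) (hq : ContDiff ℝ (⊤ : ℕ∞) q) (t : ℝ) (k : Fin d) :
    deriv (fun τ => q τ k) t = deriv q t k := by
  have h := (hq.differentiable (by simp) t).hasDerivAt
  have hcle : ⇑(EuclideanSpace.proj (𝕜 := ℝ) (ι := Fin d) k)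
      = (fun y : EuclideanSpace ℝ (Fin d) => y k) := by ext y; simp
  have h2 : HasDerivAt (fun τ => q τ k) (deriv q t k) t := by
    have h3 := (EuclideanSpace.proj (𝕜 := ℝ) (ι := Fin d) k).hasFDerivAt.comp_hasDerivAt t h
    rw [hcle] at h3; exact h3
  exact h2.deriv

lemma pdSi_sum (q p : EuclideanSpace ℝ (Fin d)) (S : Fin N → ℝ) (i : Fin N) :
    pdSi (fun _ _ s => ∑ k, s k) q p S i = 1 := by
  rw [pdSi]
  have : (fun s => ∑ k, Function.update S i s k) = fun s => s + ∑ k ∈ Finset.univ \ {i}, S k := by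
    funext s
    rw [Finset.sum_update_of_mem (Finset.mem_univ i)]
  rw [this]
  simp

lemma pdSi_coord (q p : EuclideanSpace ℝ (Fin d)) (S : Fin N → ℝ) (i i₀ : Fin N) :
    pdSi (fun _ _ s => s i₀) q p S i = if i = i₀ then 1 else 0 := by
  rw [pdSi]
  by_cases h : i = i₀
  · subst h
    simp [Function.update_self]
  · simp [Function.update_of_ne (Ne.symm h), h]

lemma pdSi_indep (f : EuclideanSpace ℝ (Fin d) → EuclideanSpace ℝ (Fin d) → ℝ)
    (q p : EuclideanSpace ℝ (Fin d)) (S : Fin N → ℝ) (i : Fin N) :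
    pdSi (fun x y _ => f x y) q p S i = 0 := by
  rw [pdSi]; simp

lemma Jmat_sum (κ : Fin N → Fin N → ℝ) (T : Fin N → ℝ) (i : Fin N) :
    ∑ j, Jmat κ i j * T j = - ∑ j, κ i j * (T j - T i) := by
  have h1 : ∀ j, Jmat κ i j * T j
      = -(κ i j * T j) + (if i = j then (∑ k, κ i k) * T j else 0) := by
    intro j
    rw [Jmat, add_mul, neg_mul, ite_mul, zero_mul]
  simp only [h1, Finset.sum_add_distrib, Finset.sum_neg_distrib, Finset.sum_ite_eq,
    Finset.mem_univ, if_true]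
  have h2 : ∑ j, κ i j * (T j - T i) = (∑ j, κ i j * T j) - (∑ j, κ i j) * T i := by
    simp only [mul_sub, Finset.sum_sub_distrib, Finset.sum_mul]
  rw [h2, Finset.sum_mul]
  ring

lemma transfer_alg (T f : Fin N → ℝ) (hT : ∀ i, T i ≠ 0) (κ : Fin N → Fin N → ℝ)
    (hκ : ∀ i j, κ i j = κ j i) :
    ∑ i, ∑ j, (κ i j / 2) * (1 / (T i * T j)) * ((f i * T j - f j * T i) * (1 * T j - 1 * T i))
      = ∑ i, (f i / T i) * (∑ j, κ i j * (T j - T i)) := by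
  set g := fun i j => (κ i j / 2) * (1 / (T i * T j)) * ((f i * T j - f j * T i) * (1 * T j - 1 * T i)) with hg
  set r := fun i j => (f i / T i) * (κ i j * (T j - T i)) with hr
  have hRHS : ∑ i, (f i / T i) * (∑ j, κ i j * (T j - T i)) = ∑ i, ∑ j, r i j := by
    refine Finset.sum_congr rfl fun i _ => ?_
    rw [Finset.mul_sum]
  rw [hRHS]
  have key : ∀ i j, g i j + g j i = r i j + r j i := by
    intro i j
    simp only [hg, hr, hκ j i]
    field_simp [hT i, hT j]
    ring
  have hmerge : ∀ (u v : Fin N → Fin N → ℝ),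
      (∑ i, ∑ j, u i j) + (∑ i, ∑ j, v i j) = ∑ i, ∑ j, (u i j + v i j) := by
    intro u v
    rw [← Finset.sum_add_distrib]
    exact Finset.sum_congr rfl fun i _ => (Finset.sum_add_distrib).symm
  have h2 : (∑ i, ∑ j, g i j) + (∑ i, ∑ j, g i j) = (∑ i, ∑ j, r i j) + (∑ i, ∑ j, r i j) := by
    have hgc : ∑ i, ∑ j, g i j = ∑ i, ∑ j, g j i := Finset.sum_comm
    have hrc : ∑ i, ∑ j, r i j = ∑ i, ∑ j, r j i := Finset.sum_comm
    calc (∑ i, ∑ j, g i j) + (∑ i, ∑ j, g i j)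
        = (∑ i, ∑ j, g i j) + (∑ i, ∑ j, g j i) := by rw [← hgc]
      _ = ∑ i, ∑ j, (g i j + g j i) := hmerge _ _
      _ = ∑ i, ∑ j, (r i j + r j i) :=
          Finset.sum_congr rfl fun i _ => Finset.sum_congr rfl fun j _ => key i j
      _ = (∑ i, ∑ j, r i j) + (∑ i, ∑ j, r j i) := (hmerge _ _).symm
      _ = (∑ i, ∑ j, r i j) + (∑ i, ∑ j, r i j) := by rw [← hrc]
  linarith

lemma pdq_fst (k : Fin d) (q p : EuclideanSpace ℝ (Fin d)) (S : Fin N → ℝ) :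
    pdq (fun x _ _ => x k : EuclideanSpace ℝ (Fin d) → EuclideanSpace ℝ (Fin d) → (Fin N → ℝ) → ℝ) q p S
      = EuclideanSpace.single k 1 := gradient_coord k q

lemma pdp_fst (k : Fin d) (q p : EuclideanSpace ℝ (Fin d)) (S : Fin N → ℝ) :
    pdp (fun x _ _ => x k : EuclideanSpace ℝ (Fin d) → EuclideanSpace ℝ (Fin d) → (Fin N → ℝ) → ℝ) q p S
      = 0 := gradient_const' _ p

lemma pdSi_fst (k : Fin d) (q p : EuclideanSpace ℝ (Fin d)) (S : Fin N → ℝ) (i : Fin N) :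
    pdSi (fun x _ _ => x k : EuclideanSpace ℝ (Fin d) → EuclideanSpace ℝ (Fin d) → (Fin N → ℝ) → ℝ) q p S i
      = 0 := by rw [pdSi]; simp

lemma pdq_snd (k : Fin d) (q p : EuclideanSpace ℝ (Fin d)) (S : Fin N → ℝ) :
    pdq (fun _ y _ => y k : EuclideanSpace ℝ (Fin d) → EuclideanSpace ℝ (Fin d) → (Fin N → ℝ) → ℝ) q p S
      = 0 := gradient_const' _ q

lemma pdp_snd (k : Fin d) (q p : EuclideanSpace ℝ (Fin d)) (S : Fin N → ℝ) :
    pdp (fun _ y _ => y k : EuclideanSpace ℝ (Fin d) → EuclideanSpace ℝ (Fin d) → (Fin N → ℝ) → ℝ) q p S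
      = EuclideanSpace.single k 1 := gradient_coord k p

lemma pdSi_snd (k : Fin d) (q p : EuclideanSpace ℝ (Fin d)) (S : Fin N → ℝ) (i : Fin N) :
    pdSi (fun _ y _ => y k : EuclideanSpace ℝ (Fin d) → EuclideanSpace ℝ (Fin d) → (Fin N → ℝ) → ℝ) q p S i
      = 0 := by rw [pdSi]; simp

lemma pdq_ent (q p : EuclideanSpace ℝ (Fin d)) (S : Fin N → ℝ) :
    pdq (fun _ _ s => ∑ k, s k : EuclideanSpace ℝ (Fin d) → EuclideanSpace ℝ (Fin d) → (Fin N → ℝ) → ℝ) q p S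
      = 0 := gradient_const' _ q

lemma pdp_ent (q p : EuclideanSpace ℝ (Fin d)) (S : Fin N → ℝ) :
    pdp (fun _ _ s => ∑ k, s k : EuclideanSpace ℝ (Fin d) → EuclideanSpace ℝ (Fin d) → (Fin N → ℝ) → ℝ) q p S
      = 0 := gradient_const' _ p

lemma pdq_scoord (i₀ : Fin N) (q p : EuclideanSpace ℝ (Fin d)) (S : Fin N → ℝ) :
    pdq (fun _ _ s => s i₀ : EuclideanSpace ℝ (Fin d) → EuclideanSpace ℝ (Fin d) → (Fin N → ℝ) → ℝ) q p S
      = 0 := gradient_const' _ q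

lemma pdp_scoord (i₀ : Fin N) (q p : EuclideanSpace ℝ (Fin d)) (S : Fin N → ℝ) :
    pdp (fun _ _ s => s i₀ : EuclideanSpace ℝ (Fin d) → EuclideanSpace ℝ (Fin d) → (Fin N → ℝ) → ℝ) q p S
      = 0 := gradient_const' _ p

end MetriAux

/-- The canonical Poisson bracket. -/
def poisson {d N : ℕ} (F G : EuclideanSpace ℝ (Fin d) → EuclideanSpace ℝ (Fin d) →
    (Fin N → ℝ) → ℝ) (q p : EuclideanSpace ℝ (Fin d)) (S : Fin N → ℝ) : ℝ :=
  ⟪pdq F q p S, pdp G q p S⟫ - ⟪pdp F q p S, pdq G q p S⟫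

/-- The friction 4-bracket of the `i`-th subsystem, with friction tensor `Λᵢ`
evaluated at `(q, ∂H/∂p, S)` and `Tᵢ = ∂H/∂Sᵢ`. -/
def bracket4fr {d N : ℕ}
    (Λ : Fin N → EuclideanSpace ℝ (Fin d) → EuclideanSpace ℝ (Fin d) → (Fin N → ℝ) →
      Matrix (Fin d) (Fin d) ℝ)
    (H F G M K : EuclideanSpace ℝ (Fin d) → EuclideanSpace ℝ (Fin d) → (Fin N → ℝ) → ℝ)
    (i : Fin N) (q p : EuclideanSpace ℝ (Fin d)) (S : Fin N → ℝ) : ℝ :=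
  let A := Λ i q (pdp H q p S) S
  let T := pdSi H q p S i
  (1 / T) *
    (⟪pdp K q p S, mulVecE A (pdp G q p S)⟫ * pdSi F q p S i * pdSi M q p S i
      - ⟪pdp K q p S, mulVecE A (pdp F q p S)⟫ * pdSi G q p S i * pdSi M q p S i
      + ⟪pdp M q p S, mulVecE A (pdp F q p S)⟫ * pdSi G q p S i * pdSi K q p S i
      - ⟪pdp M q p S, mulVecE A (pdp G q p S)⟫ * pdSi F q p S i * pdSi K q p S i)

/-- The heat-transfer 4-bracket, with `Tᵢ = ∂H/∂Sᵢ`. -/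
def bracket4tr {d N : ℕ} (κ : Fin N → Fin N → ℝ)
    (H F G M K : EuclideanSpace ℝ (Fin d) → EuclideanSpace ℝ (Fin d) → (Fin N → ℝ) → ℝ)
    (q p : EuclideanSpace ℝ (Fin d)) (S : Fin N → ℝ) : ℝ :=
  ∑ i, ∑ j,
    (κ i j / 2) * (1 / (pdSi H q p S i * pdSi H q p S j)) *
      ((pdSi F q p S i * pdSi G q p S j - pdSi F q p S j * pdSi G q p S i) *
        (pdSi M q p S i * pdSi K q p S j - pdSi M q p S j * pdSi K q p S i))

/-- Metriplectic reformulation of the dynamics of a discrete thermodynamic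
system: the Hamiltonian-form equations hold iff every smooth observable
satisfies `Ḟ = {F,H} + Σᵢ (F,H;S,H)_{fr(i)} + (F,H;S,H)_{tr}` with the total
entropy `S = Σᵢ Sᵢ`. -/
theorem discrete_system_metriplectic {d N : ℕ}
    (H : EuclideanSpace ℝ (Fin d) → EuclideanSpace ℝ (Fin d) → (Fin N → ℝ) → ℝ)
    (hH : ContDiff ℝ (⊤ : ℕ∞)
      (fun x : EuclideanSpace ℝ (Fin d) × EuclideanSpace ℝ (Fin d) × (Fin N → ℝ) =>
        H x.1 x.2.1 x.2.2))
    (Λ : Fin N → EuclideanSpace ℝ (Fin d) → EuclideanSpace ℝ (Fin d) → (Fin N → ℝ) →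
      Matrix (Fin d) (Fin d) ℝ)
    (hΛ : ∀ i q v S, (Λ i q v S).IsSymm)
    (Ffr : Fin N → EuclideanSpace ℝ (Fin d) → EuclideanSpace ℝ (Fin d) → (Fin N → ℝ) →
      EuclideanSpace ℝ (Fin d))
    (hFfr : ∀ i q v S, Ffr i q v S = - mulVecE (Λ i q v S) v)
    (κ : Fin N → Fin N → ℝ) (hκsymm : ∀ i j, κ i j = κ j i) (hκpos : ∀ i j, 0 ≤ κ i j)
    (q p : ℝ → EuclideanSpace ℝ (Fin d)) (S : ℝ → Fin N → ℝ)
    (hq : ContDiff ℝ (⊤ : ℕ∞) q) (hp : ContDiff ℝ (⊤ : ℕ∞) p) (hS : ContDiff ℝ (⊤ : ℕ∞) S)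
    (hT : ∀ (t : ℝ) (i : Fin N), pdSi H (q t) (p t) (S t) i ≠ 0) :
    (∀ t : ℝ,
        deriv q t = pdp H (q t) (p t) (S t)
        ∧ deriv p t = - pdq H (q t) (p t) (S t)
            + ∑ i, Ffr i (q t) (pdp H (q t) (p t) (S t)) (S t)
        ∧ ∀ i : Fin N,
            pdSi H (q t) (p t) (S t) i * deriv (fun τ => S τ i) t
              = - ⟪Ffr i (q t) (pdp H (q t) (p t) (S t)) (S t), pdp H (q t) (p t) (S t)⟫
                - ∑ j, Jmat κ i j * pdSi H (q t) (p t) (S t) j)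
    ↔ (∀ F : EuclideanSpace ℝ (Fin d) → EuclideanSpace ℝ (Fin d) → (Fin N → ℝ) → ℝ,
        ContDiff ℝ (⊤ : ℕ∞)
          (fun x : EuclideanSpace ℝ (Fin d) × EuclideanSpace ℝ (Fin d) × (Fin N → ℝ) =>
            F x.1 x.2.1 x.2.2) →
        ∀ t : ℝ,
          deriv (fun τ => F (q τ) (p τ) (S τ)) t
            = poisson F H (q t) (p t) (S t)
              + ∑ i, bracket4fr Λ H F H (fun _ _ s => ∑ k, s k) H i (q t) (p t) (S t)
              + bracket4tr κ H F H (fun _ _ s => ∑ k, s k) H (q t) (p t) (S t)) := by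
  constructor
  · intro hODE F hF t
    obtain ⟨hq', hp', hS'⟩ := hODE t
    rw [MetriAux.deriv_along F hF q p S hq hp hS t, hq', hp']
    set qt := q t with hqt
    set pt := p t with hpt
    set St := S t with hSt
    set B := pdp H qt pt St with hB
    set Aq := pdq H qt pt St with hAq
    set T := pdSi H qt pt St with hTdef
    set ff := pdSi F qt pt St with hff
    set b := pdp F qt pt St with hbd
    set a := pdq F qt pt St with had
    have hTi : ∀ i, T i ≠ 0 := fun i => hT t i
    simp only [poisson, bracket4fr, bracket4tr, MetriAux.pdSi_sum, MetriAux.pdp_ent,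
      inner_zero_left, zero_mul, mul_zero, sub_zero, add_zero, mul_one]
    rw [inner_add_right, inner_neg_right, inner_sum]
    simp only [hFfr, inner_neg_right]
    have hS2 : ∀ i, deriv (fun τ => S τ i) t * ff i
        = ff i / T i * (⟪mulVecE (Λ i qt B St) B, B⟫ + ∑ j, κ i j * (T j - T i)) := by
      intro i
      have h0 := hS' i
      rw [hFfr, inner_neg_left, MetriAux.Jmat_sum κ T i] at h0
      rw [div_mul_eq_mul_div, eq_div_iff (hTi i)]
      linear_combination ff i * h0
    simp only [hS2]
    rw [MetriAux.transfer_alg T ff hTi κ hκsymm]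
    have key : ∀ i, -(⟪b, mulVecE (Λ i qt B St) B⟫)
          + ff i / T i * (⟪mulVecE (Λ i qt B St) B, B⟫ + ∑ j, κ i j * (T j - T i))
        = 1 / T i * (⟪B, mulVecE (Λ i qt B St) B⟫ * ff i
            - ⟪B, mulVecE (Λ i qt B St) b⟫ * T i)
          + ff i / T i * (∑ j, κ i j * (T j - T i)) := by
      intro i
      rw [real_inner_comm B (mulVecE (Λ i qt B St) B),
        MetriAux.inner_mulVecE_symm _ (hΛ i qt B St) B b, real_inner_comm (mulVecE (Λ i qt B St) B) b]
      field_simp [hTi i]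
      ring
    have h4 : (∑ i, -(⟪b, mulVecE (Λ i qt B St) B⟫))
          + ∑ i, ff i / T i * (⟪mulVecE (Λ i qt B St) B, B⟫ + ∑ j, κ i j * (T j - T i))
        = (∑ i, 1 / T i * (⟪B, mulVecE (Λ i qt B St) B⟫ * ff i
            - ⟪B, mulVecE (Λ i qt B St) b⟫ * T i))
          + ∑ i, ff i / T i * (∑ j, κ i j * (T j - T i)) := by
      rw [← Finset.sum_add_distrib, ← Finset.sum_add_distrib]
      exact Finset.sum_congr rfl fun i _ => key i
    linarith [h4]
  · intro hBr t
    set qt := q t with hqt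
    set pt := p t with hpt
    set St := S t with hSt
    set B := pdp H qt pt St with hB
    set Aq := pdq H qt pt St with hAq
    set T := pdSi H qt pt St with hTdef
    have hTi : ∀ i, T i ≠ 0 := fun i => hT t i
    refine ⟨?_, ?_, ?_⟩
    · ext k
      have hsm : ContDiff ℝ (⊤ : ℕ∞) (fun x : EuclideanSpace ℝ (Fin d) × EuclideanSpace ℝ (Fin d) × (Fin N → ℝ) => x.1 k) := by
        have he : (⇑(EuclideanSpace.proj (𝕜 := ℝ) (ι := Fin d) k) ∘ Prod.fst)
            = (fun x : EuclideanSpace ℝ (Fin d) × EuclideanSpace ℝ (Fin d) × (Fin N → ℝ) => x.1 k) := by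
          ext x; simp
        rw [← he]
        exact (EuclideanSpace.proj (𝕜 := ℝ) (ι := Fin d) k).contDiff.comp contDiff_fst
      have h1 := hBr (fun x _ _ => x k) hsm t
      rw [MetriAux.deriv_coordE q hq t k] at h1
      simp only [poisson, bracket4fr, bracket4tr, MetriAux.pdq_fst, MetriAux.pdp_fst,
        MetriAux.pdSi_fst, MetriAux.pdp_ent, MetriAux.pdSi_sum, MetriAux.mulVecE_zero,
        inner_zero_left, inner_zero_right, zero_mul, mul_zero, sub_zero, zero_sub, add_zero,
        zero_add, mul_one, neg_zero, sub_self, Finset.sum_const_zero,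
        EuclideanSpace.inner_single_left, map_one, one_mul] at h1
      exact h1
    · ext k
      have hsm : ContDiff ℝ (⊤ : ℕ∞) (fun x : EuclideanSpace ℝ (Fin d) × EuclideanSpace ℝ (Fin d) × (Fin N → ℝ) => x.2.1 k) := by
        have he : (⇑(EuclideanSpace.proj (𝕜 := ℝ) (ι := Fin d) k) ∘ (fun x : EuclideanSpace ℝ (Fin d) × EuclideanSpace ℝ (Fin d) × (Fin N → ℝ) => x.2.1))
            = (fun x : EuclideanSpace ℝ (Fin d) × EuclideanSpace ℝ (Fin d) × (Fin N → ℝ) => x.2.1 k) := by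
          ext x; simp
        rw [← he]
        exact (EuclideanSpace.proj (𝕜 := ℝ) (ι := Fin d) k).contDiff.comp contDiff_snd.fst
      have h1 := hBr (fun _ y _ => y k) hsm t
      rw [MetriAux.deriv_coordE p hp t k] at h1
      simp only [poisson, bracket4fr, bracket4tr, MetriAux.pdq_snd, MetriAux.pdp_snd,
        MetriAux.pdSi_snd, MetriAux.pdp_ent, MetriAux.pdSi_sum, MetriAux.mulVecE_zero,
        inner_zero_left, inner_zero_right, zero_mul, mul_zero, sub_zero, zero_sub, add_zero,
        zero_add, mul_one, neg_zero, sub_self, Finset.sum_const_zero,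
        EuclideanSpace.inner_single_left, map_one, one_mul] at h1
      simp only [← hqt, ← hpt, ← hSt] at h1
      simp only [← hB, ← hAq, ← hTdef] at h1
      have hfr : ∀ i : Fin N,
          1 / T i * -(⟪B, mulVecE (Λ i qt B St) (EuclideanSpace.single k 1)⟫ * T i)
            = Ffr i qt B St k := by
        intro i
        rw [MetriAux.inner_mulVecE_symm _ (hΛ i qt B St), EuclideanSpace.inner_single_right,
          hFfr]
        have : (-mulVecE (Λ i qt B St) B) k = -(mulVecE (Λ i qt B St) B k) := rfl
        rw [this]
        simp only [starRingEnd_apply, star_trivial, one_mul]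
        field_simp [hTi i]
      simp only [hfr] at h1
      rw [h1]
      rw [PiLp.add_apply, PiLp.neg_apply, WithLp.ofLp_sum, Finset.sum_apply k Finset.univ (fun i => Ffr i qt B St)]
    · intro i₀
      have hsm : ContDiff ℝ (⊤ : ℕ∞) (fun x : EuclideanSpace ℝ (Fin d) × EuclideanSpace ℝ (Fin d) × (Fin N → ℝ) => x.2.2 i₀) :=
        ((ContinuousLinearMap.proj (R := ℝ) (φ := fun _ : Fin N => ℝ) i₀).contDiff).comp
          contDiff_snd.snd
      have h1 := hBr (fun _ _ s => s i₀) hsm t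
      simp only [poisson, bracket4fr, bracket4tr, MetriAux.pdq_scoord, MetriAux.pdp_scoord,
        MetriAux.pdSi_coord, MetriAux.pdp_ent, MetriAux.pdSi_sum, MetriAux.mulVecE_zero,
        inner_zero_left, inner_zero_right, zero_mul, mul_zero, sub_zero, zero_sub, add_zero,
        zero_add, mul_one, neg_zero, sub_self, Finset.sum_const_zero] at h1
      simp only [← hqt, ← hpt, ← hSt] at h1
      simp only [← hB, ← hAq, ← hTdef] at h1
      rw [MetriAux.transfer_alg T (fun i => if i = i₀ then (1:ℝ) else 0) hTi κ hκsymm] at h1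
      have e1 : ∑ i, 1 / T i * (⟪B, mulVecE (Λ i qt B St) B⟫ * (if i = i₀ then (1:ℝ) else 0))
          = 1 / T i₀ * ⟪B, mulVecE (Λ i₀ qt B St) B⟫ := by
        rw [Finset.sum_eq_single i₀]
        · simp
        · intro b _ hb; simp [hb]
        · simp
      have e2 : ∑ i, ((if i = i₀ then (1:ℝ) else 0) / T i * (∑ j, κ i j * (T j - T i)))
          = 1 / T i₀ * (∑ j, κ i₀ j * (T j - T i₀)) := by
        rw [Finset.sum_eq_single i₀]
        · simp
        · intro b _ hb; simp [hb]
        · simp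
      rw [e1, e2] at h1
      rw [h1, hFfr, inner_neg_left, neg_neg, MetriAux.Jmat_sum κ T i₀, sub_neg_eq_add,
        real_inner_comm (mulVecE (Λ i₀ qt B St) B) B]
      have hz : ∀ z : ℝ, T i₀ * (1 / T i₀ * z) = z := by
        intro z; field_simp
        rw [mul_comm, mul_div_assoc, div_self (hTi i₀), mul_one]
      rw [mul_add, hz, hz]


end
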